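/- The integral ∫₁^∞ s·(ln s)·K₀(s) ds is finite and strictly smaller than π/2. -/

import Mathlib

open MeasureTheory Real

/-- The modified Bessel function of the second kind of order zero,
`K₀(x) = ∫₀^∞ exp(−x cosh t) dt`. -/
noncomputable def K0 (x : ℝ) : ℝ := ∫ t in Set.Ioi (0 : ℝ), Real.exp (-x * Real.cosh t)

lemma cosh_quad {t : ℝ} (ht : 0 < t) : 1 + t^2/2 ≤ Real.cosh t := by
  have h1 : Real.cosh t = 1 + 2 * Real.sinh (t/2) ^ 2 := by
    have := Real.cosh_two_mul (t/2)
    have h2 := Real.cosh_sq (t/2)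
    rw [show 2 * (t/2) = t by ring] at this
    rw [this, h2]; ring
  have h3 : t/2 < Real.sinh (t/2) := Real.self_lt_sinh_iff.mpr (by linarith)
  nlinarith [Real.sinh_pos_iff.mpr (show (0:ℝ) < t/2 by linarith)]

lemma K0_nonneg (s : ℝ) : 0 ≤ K0 s :=
  integral_nonneg fun _ => (Real.exp_nonneg _)

lemma K0_le {s : ℝ} (hs : 1 ≤ s) : K0 s ≤ Real.sqrt (π/2) * Real.exp (-s) := by
  have hgi : IntegrableOn (fun t : ℝ => Real.exp (-s) * Real.exp (-(1/2) * t^2))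
      (Set.Ioi (0:ℝ)) :=
    ((integrable_exp_neg_mul_sq (by norm_num : (0:ℝ) < 1/2)).const_mul _).integrableOn
  have hle : ∀ t ∈ Set.Ioi (0:ℝ),
      Real.exp (-s * Real.cosh t) ≤ Real.exp (-s) * Real.exp (-(1/2) * t^2) := by
    intro t ht
    rw [← Real.exp_add]
    apply Real.exp_le_exp.mpr
    have := cosh_quad ht
    nlinarith [sq_nonneg t]
  have h1 : K0 s ≤ ∫ t in Set.Ioi (0:ℝ), Real.exp (-s) * Real.exp (-(1/2) * t^2) := by
    refine integral_mono_of_nonneg (Filter.Eventually.of_forall fun t => Real.exp_nonneg _)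
      hgi ?_
    exact (ae_restrict_iff' measurableSet_Ioi).mpr (Filter.Eventually.of_forall hle)
  have h2 : ∫ t in Set.Ioi (0:ℝ), Real.exp (-s) * Real.exp (-(1/2) * t^2)
      = Real.exp (-s) * Real.sqrt (π/2) := by
    rw [MeasureTheory.integral_const_mul, integral_gaussian_Ioi]
    congr 1
    rw [show π / (1/2:ℝ) = 2^2 * (π/2) by ring, Real.sqrt_mul (by positivity),
      Real.sqrt_sq (by norm_num : (0:ℝ) ≤ 2)]
    ring
  rw [h2] at h1
  linarith

lemma poly_exp_integrable :
    IntegrableOn (fun s : ℝ => (s^2 - s) * Real.exp (-s)) (Set.Ioi (1:ℝ)) := by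
  have hg : IntegrableOn (fun x : ℝ => Real.exp (-x) * x ^ ((3:ℝ) - 1))
      (Set.Ioi (1:ℝ)) :=
    (Real.GammaIntegral_convergent (by norm_num : (0:ℝ) < 3)).mono_set
      (Set.Ioi_subset_Ioi (by norm_num))
  refine Integrable.mono' hg ?_ ?_
  · exact (((continuous_pow 2).sub continuous_id).mul
      (Real.continuous_exp.comp continuous_neg)).aestronglyMeasurable
  · refine (ae_restrict_iff' measurableSet_Ioi).mpr (Filter.Eventually.of_forall ?_)
    intro x hx
    have hx1 : (1:ℝ) < x := hx
    have h2 : x ^ ((3:ℝ) - 1) = x ^ 2 := by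
      rw [show (3:ℝ) - 1 = ((2:ℕ):ℝ) by norm_num, Real.rpow_natCast]
    have hnn : (0:ℝ) ≤ (x^2 - x) * Real.exp (-x) :=
      mul_nonneg (by nlinarith) (Real.exp_nonneg _)
    rw [h2, Real.norm_eq_abs, abs_of_nonneg hnn]
    nlinarith [Real.exp_nonneg (-x), mul_nonneg (le_of_lt (lt_trans zero_lt_one hx1)) (Real.exp_nonneg (-x))]

lemma poly_exp_integral :
    ∫ s in Set.Ioi (1:ℝ), (s^2 - s) * Real.exp (-s) = 3 * Real.exp (-1) := by
  have hderiv : ∀ x ∈ Set.Ici (1:ℝ),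
      HasDerivAt (fun s : ℝ => -((s^2 + s + 1) * Real.exp (-s)))
        ((x^2 - x) * Real.exp (-x)) x := by
    intro x _
    have h1 : HasDerivAt (fun s : ℝ => s^2 + s + 1) (2*x + 1) x := by
      simpa using (((hasDerivAt_pow 2 x).add (hasDerivAt_id x)).add_const 1)
    have h2 : HasDerivAt (fun s : ℝ => Real.exp (-s)) (-Real.exp (-x)) x := by
      simpa using (hasDerivAt_neg x).exp
    have := (h1.mul h2).neg
    exact this.congr_deriv (by ring)
  have htend : Filter.Tendsto (fun x : ℝ => -((x^2 + x + 1) * Real.exp (-x)))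
      Filter.atTop (nhds 0) := by
    have h := (((tendsto_pow_mul_exp_neg_atTop_nhds_zero 2).add
      (tendsto_pow_mul_exp_neg_atTop_nhds_zero 1)).add
      (tendsto_pow_mul_exp_neg_atTop_nhds_zero 0)).neg
    simp only [pow_one, pow_zero, one_mul, add_zero, neg_zero] at h
    refine h.congr fun x => by ring
  have := integral_Ioi_of_hasDerivAt_of_tendsto'
    (f := fun s : ℝ => -((s^2 + s + 1) * Real.exp (-s)))
    (fun x hx => hderiv x hx) poly_exp_integrable htend
  rw [this]
  norm_num

lemma K0_sm : StronglyMeasurable K0 := by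
  have hcont : Continuous (fun p : ℝ × ℝ => Real.exp (-p.1 * Real.cosh p.2)) := by
    fun_prop
  exact hcont.stronglyMeasurable.integral_prod_right'

lemma F_bound {s : ℝ} (hs : s ∈ Set.Ioi (1:ℝ)) :
    s * Real.log s * K0 s ≤ Real.sqrt (π/2) * ((s^2 - s) * Real.exp (-s)) := by
  have hs1 : (1:ℝ) < s := hs
  have hA : 0 ≤ Real.sqrt (π/2) := Real.sqrt_nonneg _
  have hlog : 0 ≤ Real.log s := Real.log_nonneg hs1.le
  have h1 : s * Real.log s * K0 s ≤ s * Real.log s * (Real.sqrt (π/2) * Real.exp (-s)) :=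
    mul_le_mul_of_nonneg_left (K0_le hs1.le) (mul_nonneg (by linarith) hlog)
  have h2 : s * Real.log s ≤ s^2 - s := by
    have := Real.log_le_sub_one_of_pos (by linarith : (0:ℝ) < s)
    nlinarith
  have h3 : s * Real.log s * (Real.sqrt (π/2) * Real.exp (-s))
      ≤ (s^2 - s) * (Real.sqrt (π/2) * Real.exp (-s)) :=
    mul_le_mul_of_nonneg_right h2 (mul_nonneg hA (Real.exp_nonneg _))
  calc s * Real.log s * K0 s ≤ (s^2 - s) * (Real.sqrt (π/2) * Real.exp (-s)) :=
        le_trans h1 h3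
    _ = Real.sqrt (π/2) * ((s^2 - s) * Real.exp (-s)) := by ring

lemma F_nonneg {s : ℝ} (hs : s ∈ Set.Ioi (1:ℝ)) : 0 ≤ s * Real.log s * K0 s := by
  have hs1 : (1:ℝ) < s := hs
  exact mul_nonneg (mul_nonneg (by linarith) (Real.log_nonneg hs1.le)) (K0_nonneg s)

theorem integral_log_mul_besselK0_on_Ioi_one_lt :
    IntegrableOn (fun s => s * Real.log s * K0 s) (Set.Ioi (1 : ℝ)) volume ∧
      ∫ s in Set.Ioi (1 : ℝ), s * Real.log s * K0 s < Real.pi / 2 := by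
  set A := Real.sqrt (π/2) with hAdef
  have hGint : IntegrableOn (fun s : ℝ => A * ((s^2 - s) * Real.exp (-s)))
      (Set.Ioi (1:ℝ)) := poly_exp_integrable.const_mul A
  have hFm : AEStronglyMeasurable (fun s : ℝ => s * Real.log s * K0 s)
      (volume.restrict (Set.Ioi (1:ℝ))) :=
    ((stronglyMeasurable_id.mul Real.measurable_log.stronglyMeasurable).mul
      K0_sm).aestronglyMeasurable
  have hFint : IntegrableOn (fun s : ℝ => s * Real.log s * K0 s) (Set.Ioi (1:ℝ)) := by
    refine Integrable.mono' hGint hFm ?_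
    refine (ae_restrict_iff' measurableSet_Ioi).mpr (Filter.Eventually.of_forall ?_)
    intro s hs
    rw [Real.norm_eq_abs, abs_of_nonneg (F_nonneg hs)]
    exact F_bound hs
  refine ⟨hFint, ?_⟩
  have hle : ∫ s in Set.Ioi (1:ℝ), s * Real.log s * K0 s
      ≤ ∫ s in Set.Ioi (1:ℝ), A * ((s^2 - s) * Real.exp (-s)) :=
    setIntegral_mono_on hFint hGint measurableSet_Ioi fun s hs => F_bound hs
  have hGval : ∫ s in Set.Ioi (1:ℝ), A * ((s^2 - s) * Real.exp (-s))
      = A * (3 * Real.exp (-1)) := by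
    rw [MeasureTheory.integral_const_mul, poly_exp_integral]
  have hApos : 0 < A := Real.sqrt_pos.mpr (by positivity)
  have hlt : 3 * Real.exp (-1) < A := by
    rw [hAdef]
    apply (Real.lt_sqrt (by positivity)).mpr
    have he : (2.7182818283 : ℝ) < Real.exp 1 := Real.exp_one_gt_d9
    have h1 : Real.exp (-1) * Real.exp 1 = 1 := by rw [← Real.exp_add]; norm_num
    have hp : (3.141592 : ℝ) < π := Real.pi_gt_d6
    have hpos : 0 < Real.exp (-1) := Real.exp_pos _
    nlinarith [mul_pos hpos hpos, mul_pos (Real.exp_pos 1) (Real.exp_pos 1)]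
  have hfin : A * (3 * Real.exp (-1)) < π / 2 := by
    have := mul_lt_mul_of_pos_left hlt hApos
    rwa [Real.mul_self_sqrt (by positivity : (0:ℝ) ≤ π/2)] at this
  calc ∫ s in Set.Ioi (1:ℝ), s * Real.log s * K0 s
      ≤ A * (3 * Real.exp (-1)) := hGval ▸ hle
    _ < π / 2 := hfin
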